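/- The function ε(x) = ∑_{n≥0}(−x)^n/(2n+1)!! admits the asymptotic expansion ε(x) ∼ ∑_{n≥0} (2n−1)!! x^{−n−1} as x → +∞; in particular, lim_{x→+∞} x·ε(x) = 1. -/

import Mathlib

open Nat Filter

open MeasureTheory intervalIntegral

/-- The entire function `ε(x) = ∑_{n≥0} (-x)^n / (2n+1)!!`. -/
noncomputable def epsKW (x : ℝ) : ℝ := ∑' n : ℕ, (-x) ^ n / ((2 * n + 1)‼ : ℝ)

lemma dfac_pos (n : ℕ) : (0:ℝ) < ((2*n+1)‼ : ℝ) := by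
  exact_mod_cast Nat.doubleFactorial_pos _

lemma moment : ∀ n : ℕ, ∫ s in (0:ℝ)..1, (1-s^2)^n = 2^n * n ! / ((2*n+1)‼ : ℝ) := by
  intro n
  induction n with
  | zero => simp
  | succ n ih =>
    have hder : ∀ s ∈ Set.uIcc (0:ℝ) 1, HasDerivAt (fun s : ℝ => s * (1-s^2)^(n+1))
        ((2*n+3) * (1-s^2)^(n+1) - (2*n+2) * (1-s^2)^n) s := by
      intro s _
      have h1 : HasDerivAt (fun s : ℝ => 1 - s^2) (-(2*s^1)) s :=
        (hasDerivAt_pow 2 s).const_sub 1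
      have h3 := (hasDerivAt_id s).mul (h1.pow (n+1))
      simp only [Nat.add_sub_cancel, id_eq] at h3
      refine h3.congr_deriv ?_
      simp only [Pi.pow_apply]
      have e1 : ((1:ℝ)-s^2)^(n+1) = (1-s^2)^n * (1-s^2) := pow_succ _ _
      rw [e1]
      generalize ((1:ℝ)-s^2)^n = A
      push_cast
      ring
    have key := intervalIntegral.integral_eq_sub_of_hasDerivAt hder
      (ContinuousOn.intervalIntegrable (by fun_prop))
    rw [intervalIntegral.integral_sub (ContinuousOn.intervalIntegrable (by fun_prop))
        (ContinuousOn.intervalIntegrable (by fun_prop)),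
      intervalIntegral.integral_const_mul, intervalIntegral.integral_const_mul, ih] at key
    have hkey : (2*(n:ℝ)+3) * (∫ s in (0:ℝ)..1, (1-s^2)^(n+1)) = (2*n+2) * (2^n * n ! / ((2*n+1)‼ : ℝ)) := by
      have : (1:ℝ) * (1-1^2)^(n+1) - 0 * (1-0^2)^(n+1) = 0 := by norm_num
      rw [this] at key; linarith
    have hdf : ((2*(n+1)+1)‼ : ℝ) = (2*n+3) * ((2*n+1)‼ : ℝ) := by
      have : 2*(n+1)+1 = (2*n+1)+2 := by ring
      rw [this, Nat.doubleFactorial_add_two]; push_cast; ring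
    have hfa : ((n+1)! : ℝ) = (n+1) * (n ! : ℝ) := by
      rw [Nat.factorial_succ]; push_cast; ring
    have h1 : (2*(n:ℝ)+3) ≠ 0 := by positivity
    have h2 := (dfac_pos n).ne'
    rw [hdf, hfa, eq_div_iff (by positivity)]
    field_simp at hkey
    push_cast at hkey ⊢
    linear_combination hkey

lemma epsKW_repr (x : ℝ) : epsKW x = ∫ s in (0:ℝ)..1, Real.exp (-x*(1-s^2)/2) := by
  have hmeas : ∀ s : ℝ, s ∈ Set.Ioc (0:ℝ) 1 → |1 - s^2| ≤ 1 := by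
    intro s hs
    rw [abs_le]
    constructor <;> nlinarith [hs.1, hs.2]
  set F : ℕ → ℝ → ℝ := fun n s => ((-x/2)*(1-s^2))^n / (n ! : ℝ)
  have hFc : ∀ n, Continuous (F n) := by intro n; fun_prop
  have hF_int : ∀ n, Integrable (F n) (volume.restrict (Set.Ioc (0:ℝ) 1)) := fun n =>
    ((hFc n).integrableOn_Ioc).integrable
  have hbound : ∀ n, (∫ s in Set.Ioc (0:ℝ) 1, ‖F n s‖) ≤ (|x|/2)^n / (n ! : ℝ) := by
    intro n
    have hb : ∀ s ∈ Set.Ioc (0:ℝ) 1, ‖F n s‖ ≤ (|x|/2)^n / (n ! : ℝ) := by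
      intro s hs
      have h0 : |(-x/2)*(1-s^2)| ≤ |x|/2 := by
        rw [abs_mul]
        calc |(-x/2)| * |1-s^2| ≤ |(-x/2)| * 1 := by gcongr; exact hmeas s hs
          _ = |x|/2 := by rw [mul_one, abs_div, abs_neg]; simp
      have he : ‖F n s‖ = |(-x/2)*(1-s^2)|^n / (n ! : ℝ) := by
        simp [F, abs_pow, abs_mul, abs_div, abs_neg]
      rw [he]
      gcongr
    calc (∫ s in Set.Ioc (0:ℝ) 1, ‖F n s‖) ≤ ∫ _ in Set.Ioc (0:ℝ) 1, (|x|/2)^n / (n ! : ℝ) := by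
          apply MeasureTheory.setIntegral_mono_on (hF_int n).norm (integrable_const _) measurableSet_Ioc
          exact hb
      _ = (|x|/2)^n / (n ! : ℝ) := by simp
  have hF_sum : Summable (fun n => ∫ s in Set.Ioc (0:ℝ) 1, ‖F n s‖) := by
    apply Summable.of_nonneg_of_le (fun n => integral_nonneg (fun s => norm_nonneg _))
      hbound (Real.summable_pow_div_factorial (|x|/2))
  have hs := MeasureTheory.hasSum_integral_of_summable_integral_norm hF_int hF_sum
  have hptw : ∀ s : ℝ, (∑' n, F n s) = Real.exp (-x*(1-s^2)/2) := by
    intro s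
    have : Real.exp ((-x/2)*(1-s^2)) = ∑' n, ((-x/2)*(1-s^2))^n / (n ! : ℝ) := by
      rw [Real.exp_eq_exp_ℝ, NormedSpace.exp_eq_tsum_div]
    rw [show -x*(1-s^2)/2 = (-x/2)*(1-s^2) by ring, this]
  have hterm : ∀ n, (∫ s in Set.Ioc (0:ℝ) 1, F n s) = (-x)^n / ((2*n+1)‼ : ℝ) := by
    intro n
    have hm := moment n
    rw [intervalIntegral.integral_of_le (by norm_num : (0:ℝ) ≤ 1)] at hm
    have : (∫ s in Set.Ioc (0:ℝ) 1, F n s)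
        = (-x/2)^n / (n ! : ℝ) * ∫ s in Set.Ioc (0:ℝ) 1, (1-s^2)^n := by
      rw [← MeasureTheory.integral_const_mul]
      congr 1; ext s; simp only [F, mul_pow]; ring
    rw [this, hm]
    have h1 : (n ! : ℝ) ≠ 0 := by exact_mod_cast (Nat.factorial_pos n).ne'
    have h2 := (dfac_pos n).ne'
    rw [div_pow]
    field_simp
  rw [intervalIntegral.integral_of_le (by norm_num : (0:ℝ) ≤ 1)]
  have := hs.tsum_eq
  simp only [hterm] at this
  rw [epsKW, this]
  congr 1
  ext s
  exact (hptw s)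

noncomputable def aKW (n : ℕ) (x : ℝ) : ℝ :=
  ∫ s in (1/2:ℝ)..1, Real.exp (-x*(1-s^2)/2) / s^(2*n)

lemma aKW_cont_integrand (n : ℕ) (x : ℝ) :
    ContinuousOn (fun s : ℝ => Real.exp (-x*(1-s^2)/2) / s^(2*n)) (Set.uIcc (1/2:ℝ) 1) := by
  apply ContinuousOn.div (by fun_prop) (by fun_prop)
  intro s hs
  rw [Set.uIcc_of_le (by norm_num)] at hs
  have : (0:ℝ) < s := lt_of_lt_of_le (by norm_num) hs.1
  positivity

lemma aKW_rec (n : ℕ) (x : ℝ) :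
    x * aKW n x = 1 - 2^(2*n+1) * Real.exp (-(3*x)/8) + (2*n+1) * aKW (n+1) x := by
  have hder : ∀ s ∈ Set.uIcc (1/2:ℝ) 1,
      HasDerivAt (fun s : ℝ => Real.exp (-x*(1-s^2)/2) / s^(2*n+1))
        (x * (Real.exp (-x*(1-s^2)/2) / s^(2*n)) -
          (2*n+1) * (Real.exp (-x*(1-s^2)/2) / s^(2*(n+1)))) s := by
    intro s hs
    rw [Set.uIcc_of_le (by norm_num)] at hs
    have hs0 : (0:ℝ) < s := lt_of_lt_of_le (by norm_num) hs.1
    have h1 : HasDerivAt (fun s : ℝ => -x*(1-s^2)/2) (x*s) s := by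
      have : HasDerivAt (fun s : ℝ => 1 - s^2) (-(2*s^1)) s :=
        (hasDerivAt_pow 2 s).const_sub 1
      have := (this.const_mul (-x)).div_const 2
      exact this.congr_deriv (by ring)
    have h2 : HasDerivAt (fun s : ℝ => Real.exp (-x*(1-s^2)/2))
        (Real.exp (-x*(1-s^2)/2) * (x*s)) s := (Real.hasDerivAt_exp _).comp s h1
    have h3 : HasDerivAt (fun s : ℝ => (s:ℝ)^(2*n+1)) ((2*n+1) * s^(2*n)) s := by
      have := hasDerivAt_pow (2*n+1) s
      simpa using this
    have h4 := h2.div h3 (by positivity)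
    refine h4.congr_deriv ?_
    have e1 : (s:ℝ)^(2*n+1) = s^(2*n) * s := pow_succ _ _
    have e2 : (s:ℝ)^(2*(n+1)) = s^(2*n) * s^2 := by rw [← pow_add]; ring_nf
    have e3 : ((s:ℝ)^(2*n+1))^2 = (s^(2*n))^2 * s^2 := by rw [e1]; ring
    have hsn : (s:ℝ)^(2*n) ≠ 0 := by positivity
    field_simp [e1, e2, e3]
    ring
  have key := intervalIntegral.integral_eq_sub_of_hasDerivAt hder
    (ContinuousOn.intervalIntegrable (by
      apply ContinuousOn.sub
      · exact (aKW_cont_integrand n x).const_smul x |>.congr (fun s _ => by simp [smul_eq_mul])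
      · exact (aKW_cont_integrand (n+1) x).const_smul ((2*n+1:ℝ)) |>.congr (fun s _ => by simp [smul_eq_mul])))
  rw [intervalIntegral.integral_sub
      (((aKW_cont_integrand n x).const_smul x |>.congr (fun s _ => by simp [smul_eq_mul])).intervalIntegrable)
      (((aKW_cont_integrand (n+1) x).const_smul ((2*n+1:ℝ)) |>.congr (fun s _ => by simp [smul_eq_mul])).intervalIntegrable),
    intervalIntegral.integral_const_mul, intervalIntegral.integral_const_mul] at key
  have e1 : Real.exp (-x*(1-(1:ℝ)^2)/2) / (1:ℝ)^(2*n+1) = 1 := by norm_num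
  have e2 : Real.exp (-x*(1-(1/2:ℝ)^2)/2) / (1/2:ℝ)^(2*n+1) = 2^(2*n+1) * Real.exp (-(3*x)/8) := by
    rw [div_eq_iff (by positivity)]
    rw [show -x*(1-(1/2:ℝ)^2)/2 = -(3*x)/8 by ring]
    rw [mul_assoc, mul_comm (Real.exp _), ← mul_assoc, ← mul_pow]
    norm_num
  rw [e1, e2] at key
  have : x * aKW n x - (2*n+1) * aKW (n+1) x = 1 - 2^(2*n+1) * Real.exp (-(3*x)/8) := key
  linarith

lemma aKW_nonneg (n : ℕ) (x : ℝ) : 0 ≤ aKW n x := by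
  apply intervalIntegral.integral_nonneg (by norm_num)
  intro s hs
  have hs0 : (0:ℝ) < s := lt_of_lt_of_le (by norm_num) hs.1
  positivity

lemma exp_int_bound (x : ℝ) (hx : 0 < x) :
    ∫ s in (1/2:ℝ)..1, Real.exp (-x*(1-s)/2) ≤ 2/x := by
  have hder : ∀ s ∈ Set.uIcc (1/2:ℝ) 1,
      HasDerivAt (fun s : ℝ => (2/x) * Real.exp (-x*(1-s)/2)) (Real.exp (-x*(1-s)/2)) s := by
    intro s _
    have h1 : HasDerivAt (fun s : ℝ => -x*(1-s)/2) (x/2) s := by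
      have : HasDerivAt (fun s : ℝ => 1 - s) (-1) s := (hasDerivAt_id s).const_sub 1
      have := (this.const_mul (-x)).div_const 2
      exact this.congr_deriv (by ring)
    have h2 := ((Real.hasDerivAt_exp _).comp s h1).const_mul (2/x)
    refine h2.congr_deriv ?_
    field_simp
  have key := intervalIntegral.integral_eq_sub_of_hasDerivAt hder
    (ContinuousOn.intervalIntegrable (by fun_prop))
  rw [key]
  have h1 : Real.exp (-x*(1-(1:ℝ))/2) = 1 := by norm_num
  rw [h1]
  have h2 : (0:ℝ) < Real.exp (-x*(1-(1/2:ℝ))/2) := Real.exp_pos _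
  have h3 : (0:ℝ) < 2/x := by positivity
  nlinarith

lemma aKW_le (n : ℕ) (x : ℝ) (hx : 0 < x) : aKW n x ≤ 4^n * (2/x) := by
  have step1 : aKW n x ≤ ∫ s in (1/2:ℝ)..1, 4^n * Real.exp (-x*(1-s)/2) := by
    apply intervalIntegral.integral_mono_on (by norm_num)
      ((aKW_cont_integrand n x).intervalIntegrable)
      (ContinuousOn.intervalIntegrable (by fun_prop))
    intro s hs
    have hs0 : (0:ℝ) < s := lt_of_lt_of_le (by norm_num) hs.1
    have hpow : (4:ℝ)^n * s^(2*n) ≥ 1 := by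
      have : (1/2:ℝ)^(2*n) ≤ s^(2*n) := by
        apply pow_le_pow_left₀ (by norm_num) hs.1
      have e : ((1/2:ℝ))^(2*n) = (1/4:ℝ)^n := by rw [pow_mul]; norm_num
      calc (1:ℝ) = 4^n * (1/2:ℝ)^(2*n) := by
            rw [e, ← mul_pow]; norm_num
        _ ≤ 4^n * s^(2*n) := by gcongr
    have hexp : Real.exp (-x*(1-s^2)/2) ≤ Real.exp (-x*(1-s)/2) := by
      apply Real.exp_le_exp.mpr
      nlinarith [mul_nonneg (mul_nonneg hx.le hs0.le) (sub_nonneg.mpr hs.2)]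
    calc Real.exp (-x*(1-s^2)/2) / s^(2*n)
        ≤ Real.exp (-x*(1-s)/2) / s^(2*n) := by
          gcongr
      _ ≤ 4^n * Real.exp (-x*(1-s)/2) := by
          rw [div_le_iff₀ (by positivity)]
          nlinarith [Real.exp_pos (-x*(1-s)/2)]
  calc aKW n x ≤ ∫ s in (1/2:ℝ)..1, 4^n * Real.exp (-x*(1-s)/2) := step1
    _ = 4^n * ∫ s in (1/2:ℝ)..1, Real.exp (-x*(1-s)/2) := intervalIntegral.integral_const_mul _ _
    _ ≤ 4^n * (2/x) := by gcongr; exact exp_int_bound x hx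

noncomputable def bKW (x : ℝ) : ℝ := ∫ s in (0:ℝ)..(1/2), Real.exp (-x*(1-s^2)/2)

lemma dfac_step (N : ℕ) : ((2*(N+1)-1)‼ : ℝ) = (2*N+1) * ((2*N-1)‼ : ℝ) := by
  cases N with
  | zero => norm_num [Nat.doubleFactorial]
  | succ N =>
    have h1 : 2*(N+1+1)-1 = (2*N+1)+2 := by omega
    have h2 : 2*(N+1)-1 = 2*N+1 := by omega
    rw [h1, h2, Nat.doubleFactorial_add_two]
    push_cast
    ring

lemma epsKW_split (x : ℝ) : epsKW x = bKW x + aKW 0 x := by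
  rw [epsKW_repr, bKW, aKW]
  have h0 : ∀ s : ℝ, Real.exp (-x*(1-s^2)/2) / s^(2*0) = Real.exp (-x*(1-s^2)/2) := by
    intro s; simp
  rw [show (∫ s in (1/2:ℝ)..1, Real.exp (-x*(1-s^2)/2) / s^(2*0))
      = ∫ s in (1/2:ℝ)..1, Real.exp (-x*(1-s^2)/2) by
    apply intervalIntegral.integral_congr; intro s _; exact h0 s]
  rw [intervalIntegral.integral_add_adjacent_intervals
    (ContinuousOn.intervalIntegrable (by fun_prop))
    (ContinuousOn.intervalIntegrable (by fun_prop))]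

lemma bKW_nonneg (x : ℝ) : 0 ≤ bKW x := by
  apply intervalIntegral.integral_nonneg (by norm_num)
  intro s _; positivity

lemma bKW_le (x : ℝ) (hx : 0 ≤ x) : bKW x ≤ (1/2) * Real.exp (-(3*x)/8) := by
  have : bKW x ≤ ∫ _ in (0:ℝ)..(1/2), Real.exp (-(3*x)/8) := by
    apply intervalIntegral.integral_mono_on (by norm_num)
      (ContinuousOn.intervalIntegrable (by fun_prop))
      (intervalIntegrable_const)
    intro s hs
    apply Real.exp_le_exp.mpr
    have hs2 : s^2 ≤ 1/4 := by nlinarith [hs.1, hs.2]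
    nlinarith [mul_nonneg hx (by linarith : (0:ℝ) ≤ 1/4 - s^2)]
  simpa using this

lemma unfold_key (N : ℕ) (x : ℝ) (hx : 0 < x) :
    x^(N+1) * (epsKW x - ∑ n ∈ Finset.range N, ((2*n-1)‼ : ℝ)/x^(n+1))
    = ((2*N-1)‼ : ℝ) * (x * aKW N x)
      - Real.exp (-(3*x)/8) * (x^(N+1) * ∑ n ∈ Finset.range N, ((2*n-1)‼ : ℝ)*2^(2*n+1)/x^(n+1))
      + x^(N+1) * bKW x := by
  induction N with
  | zero =>
    simp only [Finset.range_zero, Finset.sum_empty, mul_zero, sub_zero, pow_one]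
    rw [epsKW_split x]
    norm_num [Nat.doubleFactorial]
    ring
  | succ N ih =>
    have hx1 : x^(N+1) ≠ 0 := pow_ne_zero _ hx.ne'
    rw [Finset.sum_range_succ, Finset.sum_range_succ, dfac_step]
    have h1 : ∀ E S c : ℝ, x^(N+1+1) * (E - (S + c/x^(N+1)))
        = x * (x^(N+1) * (E - S)) - x*c := by
      intro E S c
      rw [pow_succ]
      field_simp
      ring
    have h2 : ∀ T c : ℝ, x^(N+1+1) * (T + c/x^(N+1)) = x * (x^(N+1) * T) + x*c := by
      intro T c
      rw [pow_succ]
      field_simp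
    rw [h1, h2, ih, aKW_rec N x]
    ring

lemma tendsto_exp38 : Tendsto (fun x : ℝ => Real.exp (-(3*x)/8)) atTop (nhds 0) := by
  have hlin : Tendsto (fun x : ℝ => 3*x/8) atTop atTop :=
    (tendsto_id.const_mul_atTop (by norm_num : (0:ℝ) < 3)).atTop_div_const (by norm_num)
  have := Real.tendsto_exp_neg_atTop_nhds_zero.comp hlin
  apply this.congr
  intro x
  simp only [Function.comp]
  ring_nf

lemma tendsto_pow_exp38 (k : ℕ) :
    Tendsto (fun x : ℝ => x^k * Real.exp (-(3*x)/8)) atTop (nhds 0) := by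
  have hlin : Tendsto (fun x : ℝ => 3*x/8) atTop atTop :=
    (tendsto_id.const_mul_atTop (by norm_num : (0:ℝ) < 3)).atTop_div_const (by norm_num)
  have h := (Real.tendsto_pow_mul_exp_neg_atTop_nhds_zero k).comp hlin
  have h2 := h.const_mul ((8/3:ℝ)^k)
  rw [mul_zero] at h2
  apply h2.congr'
  filter_upwards [eventually_gt_atTop (0:ℝ)] with x hx
  simp only [Function.comp]
  rw [show -(3*x/8) = -(3*x)/8 by ring]
  rw [← mul_assoc, ← mul_pow, show (8/3:ℝ)*(3*x/8) = x by ring]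

lemma tendsto_x_aKW (N : ℕ) : Tendsto (fun x : ℝ => x * aKW N x) atTop (nhds 1) := by
  have hA : Tendsto (fun x : ℝ => aKW (N+1) x) atTop (nhds 0) := by
    apply tendsto_of_tendsto_of_tendsto_of_le_of_le' (g := fun _ => (0:ℝ))
      (h := fun x : ℝ => 4^(N+1) * (2/x)) tendsto_const_nhds
    · have : Tendsto (fun x : ℝ => 2/x) atTop (nhds 0) := by
        simpa using tendsto_const_nhds.div_atTop (tendsto_id (α := ℝ))
      simpa using this.const_mul ((4:ℝ)^(N+1))
    · exact Eventually.of_forall (fun x => aKW_nonneg _ _)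
    · filter_upwards [eventually_gt_atTop (0:ℝ)] with x hx
      exact aKW_le _ _ hx
  have := ((tendsto_const_nhds (x := (1:ℝ)) (f := atTop)).sub
      (tendsto_exp38.const_mul (2^(2*N+1)))).add (hA.const_mul ((2*N+1 : ℝ)))
  simp only [mul_zero, sub_zero, add_zero] at this
  apply this.congr
  intro x
  rw [aKW_rec N x]

lemma main_tendsto (N : ℕ) : Tendsto
    (fun x : ℝ => x ^ (N + 1) *
      (epsKW x - ∑ n ∈ Finset.range N, ((2 * n - 1)‼ : ℝ) / x ^ (n + 1)))
    atTop (nhds ((2 * N - 1)‼ : ℝ)) := by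
  set C : ℝ := ∑ n ∈ Finset.range N, ((2*n-1)‼ : ℝ)*2^(2*n+1) with hC
  have hf2 : Tendsto (fun x : ℝ =>
      Real.exp (-(3*x)/8) * (x^(N+1) * ∑ n ∈ Finset.range N, ((2*n-1)‼ : ℝ)*2^(2*n+1)/x^(n+1)))
      atTop (nhds 0) := by
    apply squeeze_zero' (g := fun x : ℝ => C * (x^(N+1) * Real.exp (-(3*x)/8)))
    · filter_upwards [eventually_gt_atTop (0:ℝ)] with x hx
      have hS : 0 ≤ ∑ n ∈ Finset.range N, ((2*n-1)‼ : ℝ)*2^(2*n+1)/x^(n+1) := by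
        apply Finset.sum_nonneg; intro n _; positivity
      positivity
    · filter_upwards [eventually_ge_atTop (1:ℝ)] with x hx
      have hx0 : (0:ℝ) < x := lt_of_lt_of_le one_pos hx
      have hS : (∑ n ∈ Finset.range N, ((2*n-1)‼ : ℝ)*2^(2*n+1)/x^(n+1)) ≤ C := by
        rw [hC]
        apply Finset.sum_le_sum
        intro n _
        exact _root_.div_le_self (by positivity) (one_le_pow₀ hx)
      calc Real.exp (-(3*x)/8) * (x^(N+1) * ∑ n ∈ Finset.range N, ((2*n-1)‼ : ℝ)*2^(2*n+1)/x^(n+1))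
          ≤ Real.exp (-(3*x)/8) * (x^(N+1) * C) := by
            gcongr
        _ = C * (x^(N+1) * Real.exp (-(3*x)/8)) := by ring
    · simpa using (tendsto_pow_exp38 (N+1)).const_mul C
  have hf3 : Tendsto (fun x : ℝ => x^(N+1) * bKW x) atTop (nhds 0) := by
    apply squeeze_zero' (g := fun x : ℝ => (1/2) * (x^(N+1) * Real.exp (-(3*x)/8)))
    · filter_upwards [eventually_gt_atTop (0:ℝ)] with x hx
      have := bKW_nonneg x
      positivity
    · filter_upwards [eventually_gt_atTop (0:ℝ)] with x hx
      have := bKW_le x hx.le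
      calc x^(N+1) * bKW x ≤ x^(N+1) * ((1/2) * Real.exp (-(3*x)/8)) := by
            gcongr
        _ = (1/2) * (x^(N+1) * Real.exp (-(3*x)/8)) := by ring
    · simpa using (tendsto_pow_exp38 (N+1)).const_mul (1/2 : ℝ)
  have hf1 : Tendsto (fun x : ℝ => ((2*N-1)‼ : ℝ) * (x * aKW N x)) atTop
      (nhds ((2*N-1)‼ : ℝ)) := by
    have := (tendsto_x_aKW N).const_mul ((2*N-1)‼ : ℝ)
    simpa using this
  have hsum := (hf1.sub hf2).add hf3
  rw [sub_zero, add_zero] at hsum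
  apply hsum.congr'
  filter_upwards [eventually_gt_atTop (0:ℝ)] with x hx
  exact (unfold_key N x hx).symm

/-- `ε(x)` has the asymptotic expansion `ε(x) ∼ ∑_{n≥0} (2n-1)!! x^{-n-1}` as
`x → +∞`: for each `N`, `x^{N+1}(ε(x) - ∑_{n<N} (2n-1)!! x^{-n-1}) → (2N-1)!!`.
In particular (the case `N = 0`), `x·ε(x) → 1` as `x → +∞`.
Here `(2n-1)!!` is interpreted with `(-1)!! = 1` (ℕ-subtraction: `(2·0-1)‼ = 0‼ = 1`). -/
theorem epsKW_asymptotic_expansion :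
    Tendsto (fun x : ℝ => x * epsKW x) atTop (nhds 1) ∧
    ∀ N : ℕ, Tendsto
      (fun x : ℝ => x ^ (N + 1) *
        (epsKW x - ∑ n ∈ Finset.range N, ((2 * n - 1)‼ : ℝ) / x ^ (n + 1)))
      atTop (nhds ((2 * N - 1)‼ : ℝ)) := by
  constructor
  · have := main_tendsto 0
    simp only [Finset.range_zero, Finset.sum_empty, sub_zero, pow_one] at this
    norm_num [Nat.doubleFactorial] at this
    exact this
  · exact main_tendsto
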